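/- arXiv:2605.03481 — 2 statements merged into one kernel-verified Lean document; each statement's English description precedes it below -/
import Mathlib

section
/- For every integer n ≥ 3 and every real λ, the determinant of J(n,λ) equals λ·(λ−2)²·(λ−3)·(λ−n)³·(λ−(n+1)). -/
open Matrix

/-- The indicial family `I_{g₍₀₎}(λ)` of the linearized gauge-fixed Einstein operator,
in the block decomposition of symmetric 2-tensors (all blocks scalar, with the trace
replaced by multiplication by `n`). -/
noncomputable def J (n : ℕ) (lam : ℝ) : Matrix (Fin 4) (Fin 4) ℝ :=
  (lam ^ 2 - (n : ℝ) * lam) • (1 : Matrix (Fin 4) (Fin 4) ℝ) +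
    !![-4 * lam + 2 * ((n : ℝ) + 2), 0, 2 * (n : ℝ) * (lam - 2), 0;
       0, -4 * lam + 3 * ((n : ℝ) + 1), 0, 0;
       (-2 : ℝ), 0, 2 * (n : ℝ), 0;
       0, 0, 0, 0]

lemma J_eq (n : ℕ) (lam : ℝ) :
    J n lam =
      !![lam ^ 2 - (n : ℝ) * lam + (-4 * lam + 2 * ((n : ℝ) + 2)), 0, 2 * (n : ℝ) * (lam - 2), 0;
         0, lam ^ 2 - (n : ℝ) * lam + (-4 * lam + 3 * ((n : ℝ) + 1)), 0, 0;
         (-2 : ℝ), 0, lam ^ 2 - (n : ℝ) * lam + 2 * (n : ℝ), 0;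
         0, 0, 0, lam ^ 2 - (n : ℝ) * lam] := by
  ext i j
  fin_cases i <;> fin_cases j <;>
    simp [_root_.J, Matrix.one_apply, Matrix.smul_apply, Matrix.vecHead, Matrix.vecTail]

lemma det4 (a b c d e f : ℝ) :
    (!![a, 0, b, 0; 0, c, 0, 0; d, 0, e, 0; 0, 0, 0, f]).det
      = c * f * (a * e - b * d) := by
  simp [Matrix.det_succ_row_zero, Fin.sum_univ_succ, Fin.succAbove]
  ring

/-- The determinant of the indicial family factors as
`λ (λ−2)² (λ−3) (λ−n)³ (λ−(n+1))`. -/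
theorem det_indicial_family (n : ℕ) (hn : 3 ≤ n) (lam : ℝ) :
    (J n lam).det
      = lam * (lam - 2) ^ 2 * (lam - 3) * (lam - (n : ℝ)) ^ 3 * (lam - ((n : ℝ) + 1)) := by
  rw [J_eq, det4]
  ring
end

section
/- For every integer n ≥ 3, the set of real numbers λ with det J(n,λ) = 0 is exactly {0, 2, 3, n, n+1}; in particular every indicial root of the linearized gauge-fixed Einstein operator is a nonnegative integer. -/
open Matrix

/-- The indicial roots, i.e. the real zeros of `λ ↦ det J(n,λ)`, are exactly
`{0, 2, 3, n, n+1}`; in particular every indicial root is a nonnegative integer. -/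
theorem indicial_roots (n : ℕ) (hn : 3 ≤ n) :
    {lam : ℝ | (J n lam).det = 0} = {0, 2, 3, (n : ℝ), (n : ℝ) + 1} ∧
    ∀ lam : ℝ, (J n lam).det = 0 → ∃ k : ℕ, lam = (k : ℝ) := by
  have hdet : ∀ lam : ℝ, (J n lam).det =
      lam * (lam - 2) ^ 2 * (lam - 3) * (lam - (n : ℝ)) ^ 3 * (lam - ((n : ℝ) + 1)) := by
    intro lam
    have hJ : J n lam = !![lam ^ 2 - (n : ℝ) * lam + (-4 * lam + 2 * ((n : ℝ) + 2)), 0,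
        2 * (n : ℝ) * (lam - 2), 0;
        0, lam ^ 2 - (n : ℝ) * lam + (-4 * lam + 3 * ((n : ℝ) + 1)), 0, 0;
        (-2 : ℝ), 0, lam ^ 2 - (n : ℝ) * lam + 2 * (n : ℝ), 0;
        0, 0, 0, lam ^ 2 - (n : ℝ) * lam] := by
      ext i j
      fin_cases i <;> fin_cases j <;>
        norm_num [_root_.J, Matrix.one_apply, Fin.ext_iff, Matrix.vecHead, Matrix.vecTail]
    rw [hJ, Matrix.det_succ_row_zero]
    simp [Fin.sum_univ_succ, Matrix.det_fin_three, Fin.succAbove]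
    ring
  have hzero : ∀ lam : ℝ, (J n lam).det = 0 ↔
      (lam = 0 ∨ lam = 2 ∨ lam = 3 ∨ lam = (n : ℝ) ∨ lam = (n : ℝ) + 1) := by
    intro lam
    rw [hdet]
    constructor
    · intro h
      rcases mul_eq_zero.1 h with h | h
      · rcases mul_eq_zero.1 h with h | h
        · rcases mul_eq_zero.1 h with h | h
          · rcases mul_eq_zero.1 h with h | h
            · exact Or.inl h
            · exact Or.inr (Or.inl (by linarith [pow_eq_zero_iff (n := 2) two_ne_zero |>.1 h]))
          · exact Or.inr (Or.inr (Or.inl (by linarith)))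
        · exact Or.inr (Or.inr (Or.inr (Or.inl
            (by linarith [pow_eq_zero_iff (n := 3) three_ne_zero |>.1 h]))))
      · exact Or.inr (Or.inr (Or.inr (Or.inr (by linarith))))
    · rintro (rfl | rfl | rfl | rfl | rfl) <;> ring
  constructor
  · ext lam
    simp only [Set.mem_setOf_eq, Set.mem_insert_iff, Set.mem_singleton_iff]
    exact hzero lam
  · intro lam h
    rcases (hzero lam).1 h with rfl | rfl | rfl | rfl | rfl
    · exact ⟨0, by norm_num⟩
    · exact ⟨2, by norm_num⟩
    · exact ⟨3, by norm_num⟩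
    · exact ⟨n, rfl⟩
    · exact ⟨n + 1, by push_cast; ring⟩
end
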